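/- Every element γ of Γ can be expressed uniquely in the form γ = a·m_0 + g_s + b·m_n with a ∈ ℕ₀ and (s,b) ∈ V∖W. -/

import Mathlib

/-- For `t ≥ 1`, the quotient `q_t` in the division `t = q_t·p + r_t` with `r_t ∈ [1,p]`. -/
def qF (p t : ℕ) : ℕ := (t - 1) / p

/-- For `t ≥ 1`, the remainder `r_t ∈ [1,p]` in the division `t = q_t·p + r_t`. -/
def rF (p t : ℕ) : ℕ := (t - 1) % p + 1

/-- `g_t = q_t·m_p + m_{r_t}` for `t ≥ 1`, and `g_0 = 0`. -/
def gF (p : ℕ) (m : ℕ → ℕ) (t : ℕ) : ℕ :=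
  if t = 0 then 0 else qF p t * m p + m (rF p t)

/-- The set of non-negative integer combinations `Σ_{i=0}^{k} a_i·m_i`. -/
def gammaGen (k : ℕ) (m : ℕ → ℕ) : Set ℕ :=
  {x | ∃ a : ℕ → ℕ, x = ∑ i ∈ Finset.range (k + 1), a i * m i}

/-! Since `m_i = m_0 + i·c`, one has `g_t = ⌈t/p⌉·m_0 + t·c`, and `⌈·/p⌉` is subadditive with
defect at most one. Hence every element of `Γ` is `a·m_0 + g_t + e·m_n`, and the relations
`g_u = λ·m_0 + w·m_n` and `υ·m_n = μ·m_0 + g_z` move `(t, e)` to `(t - u, e + w)`, to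
`(t + z, e - υ)` or (in the corner `W`) to `(t + z - u, e + w - υ)` at the cost of a
non-negative multiple of `m_0` (here `λ ≥ 1` pays for the defect); `υ·t + u·e` drops each time,
so `(t, e)` ends in `V ∖ W`.

Uniqueness is a statement modulo `m_0`, where `g_t ≡ t·c`. If `t·c ≡ e·m_n` with `t < u`, `e < υ`,
then `e·m_n ≥ g_t` (else `g_t - m_0 ∈ Γ`, against `g_t ∈ S`), so `e·m_n ∈ Γ'`, forcing `e = 0` and
then `t = 0`. A coincidence of two points of `V ∖ W` yields such a congruence after using
`u·c ≡ w·m_n` or `υ·m_n ≡ z·c` once, which is exactly what leaving out `W` allows. -/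

open Finset

namespace Nat

theorem add_ceilDiv_le {p : ℕ} (hp : 0 < p) (a b : ℕ) : (a + b) ⌈/⌉ p ≤ a ⌈/⌉ p + b ⌈/⌉ p := by
  rw [ceilDiv_le_iff_le_mul hp, mul_add]
  exact add_le_add (le_smul_ceilDiv hp) (le_smul_ceilDiv hp)

theorem ceilDiv_add_ceilDiv_le (a b p : ℕ) : a ⌈/⌉ p + b ⌈/⌉ p ≤ (a + b) ⌈/⌉ p + 1 := by
  simp only [ceilDiv_eq_add_pred_div]
  rcases Nat.eq_zero_or_pos p with rfl | hp
  · simp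
  calc (a + p - 1) / p + (b + p - 1) / p ≤ (a + p - 1 + (b + p - 1)) / p := div_add_div_le_add_div
    _ ≤ (a + b + p - 1 + p) / p := Nat.div_le_div_right (by omega)
    _ = (a + b + p - 1) / p + 1 := Nat.add_div_right _ hp

end Nat

section Generators

variable {p : ℕ} {m : ℕ → ℕ} {c : ℕ}

theorem rF_le (hp : 0 < p) (t : ℕ) : rF p t ≤ p := Nat.mod_lt _ hp

theorem gF_eq_ceilDiv (hp : 0 < p) (harith : ∀ i ≤ p, m i = m 0 + i * c) (t : ℕ) :
    gF p m t = t ⌈/⌉ p * m 0 + t * c := by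
  rcases Nat.eq_zero_or_pos t with rfl | ht
  · simp [gF]
  have hceil : t ⌈/⌉ p = qF p t + 1 := by
    rw [Nat.ceilDiv_eq_add_pred_div, qF, show t + p - 1 = t - 1 + 1 * p by omega,
      Nat.add_mul_div_right _ _ hp]
  have hdiv : p * qF p t + rF p t = t := by
    have := Nat.div_add_mod (t - 1) p
    unfold qF rF
    omega
  rw [gF, if_neg ht.ne', harith p le_rfl, harith _ (rF_le hp t), hceil]
  generalize qF p t = q, rF p t = r at hdiv ⊢
  subst hdiv
  ring

theorem gF_pos (hp : 0 < p) (harith : ∀ i ≤ p, m i = m 0 + i * c) (hm0 : 0 < m 0) {t : ℕ}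
    (ht : t ≠ 0) : 0 < gF p m t := by
  rw [gF, if_neg ht, harith _ (rF_le hp t)]
  omega

theorem natCast_gF (hp : 0 < p) (harith : ∀ i ≤ p, m i = m 0 + i * c) (t : ℕ) :
    (gF p m t : ZMod (m 0)) = t • (c : ZMod (m 0)) := by
  simp [gF_eq_ceilDiv hp harith, nsmul_eq_mul]

theorem exists_gF_add_eq (hp : 0 < p) (harith : ∀ i ≤ p, m i = m 0 + i * c) (s t : ℕ) :
    ∃ k, gF p m s + gF p m t = gF p m (s + t) + k * m 0 := by
  refine ⟨s ⌈/⌉ p + t ⌈/⌉ p - (s + t) ⌈/⌉ p, ?_⟩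
  have := Nat.add_ceilDiv_le hp s t
  simp only [gF_eq_ceilDiv hp harith]
  zify [this]
  ring

theorem exists_gF_add_add_eq (hp : 0 < p) (harith : ∀ i ≤ p, m i = m 0 + i * c) (s t : ℕ) :
    ∃ k, gF p m (s + t) + m 0 = gF p m s + gF p m t + k * m 0 := by
  refine ⟨(s + t) ⌈/⌉ p + 1 - (s ⌈/⌉ p + t ⌈/⌉ p), ?_⟩
  have := Nat.ceilDiv_add_ceilDiv_le s t p
  simp only [gF_eq_ceilDiv hp harith]
  zify [this]
  ring

theorem add_mem_gammaGen {k x y : ℕ} (hx : x ∈ gammaGen k m) (hy : y ∈ gammaGen k m) :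
    x + y ∈ gammaGen k m := by
  obtain ⟨a, rfl⟩ := hx
  obtain ⟨b, rfl⟩ := hy
  exact ⟨a + b, by simp [add_mul, sum_add_distrib]⟩

theorem mul_mem_gammaGen {k j : ℕ} (hj : j ≤ k) (d : ℕ) : d * m j ∈ gammaGen k m := by
  refine ⟨Pi.single j d, ?_⟩
  rw [sum_eq_single_of_mem j (mem_range.2 (Nat.lt_succ_of_le hj))]
  · simp
  · intro i _ hij
    simp [hij]

theorem gF_mem_gammaGen (hp : 0 < p) {k : ℕ} (hpk : p ≤ k) (t : ℕ) : gF p m t ∈ gammaGen k m := by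
  unfold gF
  split_ifs
  · exact ⟨0, by simp⟩
  · simpa using add_mem_gammaGen (mul_mem_gammaGen hpk (qF p t))
      (mul_mem_gammaGen ((rF_le hp t).trans hpk) 1)

theorem exists_eq_mul_add_gF_add_mul (hp : 0 < p) (harith : ∀ i ≤ p, m i = m 0 + i * c)
    {γ : ℕ} (hγ : γ ∈ gammaGen (p + 1) m) :
    ∃ a t e, γ = a * m 0 + gF p m t + e * m (p + 1) := by
  obtain ⟨f, rfl⟩ := hγ
  set A := ∑ i ∈ range (p + 1), f i
  set T := ∑ i ∈ range (p + 1), i * f i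
  have hsum : ∑ i ∈ range (p + 1), f i * m i = A * m 0 + T * c := by
    simp only [A, T, sum_mul, ← sum_add_distrib]
    refine sum_congr rfl fun i hi => ?_
    rw [harith i (Nat.lt_succ_iff.1 (mem_range.1 hi))]
    ring
  have hT : T ⌈/⌉ p ≤ A := by
    rw [ceilDiv_le_iff_le_mul hp, mul_sum]
    exact sum_le_sum fun i hi => Nat.mul_le_mul_right _ (Nat.lt_succ_iff.1 (mem_range.1 hi))
  refine ⟨A - T ⌈/⌉ p, T, f (p + 1), ?_⟩
  rw [sum_range_succ, hsum, gF_eq_ceilDiv hp harith]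
  zify [hT]
  ring

end Generators

section Lattice

variable {G : Type*} [AddCommGroup G] {x y : G} {u v z w : ℕ}

theorem eq_zero_of_nsmul_add_nsmul_eq_zero
    (hkey : ∀ t < u, ∀ e < v, t • x = e • y → t = 0 ∧ e = 0)
    (hux : u • x = w • y) (hvy : v • y = z • x) (hz : z < u)
    {σ β : ℕ} (hσ : σ < u) (hβ : β < v) (hcorner : ¬(u - z ≤ σ ∧ v - w ≤ β))
    (h : σ • x + β • y = 0) : σ = 0 ∧ β = 0 := by
  have hσx : σ • x = -(β • y) := eq_neg_of_add_eq_zero_left h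
  rcases Nat.eq_zero_or_pos β with rfl | hβ0
  · exact hkey σ hσ 0 hβ (by simpa using h)
  exfalso
  by_cases hσz : σ + z < u
  · have := hkey (σ + z) hσz (v - β) (by omega)
      (by rw [add_nsmul, sub_nsmul y hβ.le, hσx, hvy]; abel)
    omega
  · have := hkey (u - σ) (by omega) (w + β) (by omega)
      (by rw [sub_nsmul x hσ.le, hux, hσx, add_nsmul]; abel)
    omega

theorem eq_of_nsmul_add_nsmul_eq
    (hkey : ∀ t < u, ∀ e < v, t • x = e • y → t = 0 ∧ e = 0)
    (hux : u • x = w • y) (hvy : v • y = z • x) (hz : z < u)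
    {s b s' b' : ℕ} (hs : s < u) (hb : b < v) (hsb : ¬(u - z ≤ s ∧ v - w ≤ b))
    (hs' : s' < u) (hb' : b' < v) (hsb' : ¬(u - z ≤ s' ∧ v - w ≤ b'))
    (h : s • x + b • y = s' • x + b' • y) : s = s' ∧ b = b' := by
  wlog hbb : b' ≤ b generalizing s b s' b'
  · exact (this hs' hb' hsb' hs hb hsb h.symm (by omega)).imp Eq.symm Eq.symm
  rcases le_or_gt s' s with hss | hss
  · have := eq_zero_of_nsmul_add_nsmul_eq_zero hkey hux hvy hz (σ := s - s') (β := b - b')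
      (by omega) (by omega) (by omega)
      (by rw [sub_nsmul x hss, sub_nsmul y hbb]; linear_combination (norm := module) h)
    omega
  · have := hkey (s' - s) (by omega) (b - b') (by omega)
      (by rw [sub_nsmul x hss.le, sub_nsmul y hbb]; linear_combination (norm := module) -h)
    omega

end Lattice

section Apery

variable {p : ℕ} {m : ℕ → ℕ} {c : ℕ}

theorem eq_zero_of_nsmul_eq_nsmul_of_apery (hp : 0 < p) (harith : ∀ i ≤ p, m i = m 0 + i * c)
    (hm0 : 0 < m 0) {u v : ℕ}
    (hu : ∀ t < u, ∀ δ ∈ gammaGen (p + 1) m, δ + m 0 ≠ gF p m t)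
    (hv : ∀ e, 0 < e → e < v → e * m (p + 1) ∉ gammaGen p m)
    {t e : ℕ} (ht : t < u) (he : e < v)
    (h : t • (c : ZMod (m 0)) = e • (m (p + 1) : ZMod (m 0))) : t = 0 ∧ e = 0 := by
  have hmod : gF p m t ≡ e * m (p + 1) [MOD m 0] := by
    rw [← ZMod.natCast_eq_natCast_iff, natCast_gF hp harith, h, nsmul_eq_mul, Nat.cast_mul]
  obtain ⟨k, hk⟩ : ∃ k, e * m (p + 1) = k * m 0 + gF p m t := by
    rcases le_total (gF p m t) (e * m (p + 1)) with hle | hle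
    · obtain ⟨k, hk⟩ := (Nat.modEq_iff_dvd' hle).1 hmod
      exact ⟨k, by linarith [Nat.sub_add_cancel hle, mul_comm (m 0) k]⟩
    · obtain ⟨k, hk⟩ := (Nat.modEq_iff_dvd' hle).1 hmod.symm
      rcases k with _ | k
      · exact ⟨0, by omega⟩
      · refine absurd ?_ (hu t ht (k * m 0 + e * m (p + 1))
          (add_mem_gammaGen (mul_mem_gammaGen (Nat.zero_le _) k) (mul_mem_gammaGen le_rfl e)))
        rw [Nat.mul_succ] at hk
        linarith [Nat.sub_add_cancel hle]
  have he0 : e = 0 := by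
    by_contra he0
    exact hv e (Nat.pos_of_ne_zero he0) he
      (hk ▸ add_mem_gammaGen (mul_mem_gammaGen (Nat.zero_le _) k) (gF_mem_gammaGen hp le_rfl t))
  subst he0
  refine ⟨by_contra fun ht0 => ?_, rfl⟩
  have := gF_pos hp harith hm0 ht0
  rw [zero_mul] at hk
  omega

theorem exists_gF_eq_gF_sub_add (hp : 0 < p) (harith : ∀ i ≤ p, m i = m 0 + i * c)
    {u lam w : ℕ} (hlam : 0 < lam) (hgu : gF p m u = lam * m 0 + w * m (p + 1))
    {t : ℕ} (ht : u ≤ t) : ∃ k, gF p m t = gF p m (t - u) + w * m (p + 1) + k * m 0 := by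
  obtain ⟨k, hk⟩ := exists_gF_add_add_eq hp harith (t - u) u
  rw [Nat.sub_add_cancel ht, hgu] at hk
  obtain ⟨l, rfl⟩ := Nat.exists_eq_add_of_lt hlam
  exact ⟨k + l, by linarith⟩

theorem exists_gF_add_mul_eq (hp : 0 < p) (harith : ∀ i ≤ p, m i = m 0 + i * c)
    {v mu z : ℕ} (hvmn : v * m (p + 1) = mu * m 0 + gF p m z) (t : ℕ) :
    ∃ k, gF p m t + v * m (p + 1) = gF p m (t + z) + k * m 0 := by
  obtain ⟨k, hk⟩ := exists_gF_add_eq hp harith t z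
  exact ⟨k + mu, by rw [hvmn]; linarith⟩

theorem exists_normal_form (hp : 0 < p) (harith : ∀ i ≤ p, m i = m 0 + i * c)
    {u v lam w mu z : ℕ} (hlam : 0 < lam) (hw : w < v) (hz : z < u)
    (hgu : gF p m u = lam * m 0 + w * m (p + 1))
    (hvmn : v * m (p + 1) = mu * m 0 + gF p m z) (t e : ℕ) :
    ∃ s b k, s < u ∧ b < v ∧ ¬(u - z ≤ s ∧ v - w ≤ b) ∧
      gF p m t + e * m (p + 1) = gF p m s + b * m (p + 1) + k * m 0 := by
  induction hN : v * t + u * e using Nat.strong_induction_on generalizing t e with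
  | _ N ih =>
  have descend : ∀ t' e' k, v * t' + u * e' < N →
      gF p m t + e * m (p + 1) = gF p m t' + e' * m (p + 1) + k * m 0 →
      ∃ s b k, s < u ∧ b < v ∧ ¬(u - z ≤ s ∧ v - w ≤ b) ∧
        gF p m t + e * m (p + 1) = gF p m s + b * m (p + 1) + k * m 0 := by
    intro t' e' k hlt heq
    obtain ⟨s, b, k', hs, hb, hsb, heq'⟩ := ih _ hlt t' e' rfl
    exact ⟨s, b, k + k', hs, hb, hsb, by rw [heq, heq']; ring⟩
  by_cases htu : u ≤ t
  · obtain ⟨k, hk⟩ := exists_gF_eq_gF_sub_add hp harith hlam hgu htu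
    obtain ⟨t', rfl⟩ := Nat.exists_eq_add_of_le htu
    rw [Nat.add_sub_cancel_left] at hk
    exact descend t' (e + w) k (by nlinarith) (by rw [hk]; ring)
  by_cases hev : v ≤ e
  · obtain ⟨k, hk⟩ := exists_gF_add_mul_eq hp harith hvmn t
    obtain ⟨e', rfl⟩ := Nat.exists_eq_add_of_le hev
    exact descend (t + z) e' k (by nlinarith) (by linear_combination hk)
  by_cases hcorner : u - z ≤ t ∧ v - w ≤ e
  · obtain ⟨k₁, hk₁⟩ := exists_gF_add_mul_eq hp harith hvmn t
    obtain ⟨k₂, hk₂⟩ := exists_gF_eq_gF_sub_add hp harith hlam hgu (show u ≤ t + z by omega)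
    obtain ⟨t', ht'⟩ : ∃ t', t + z = u + t' := Nat.exists_eq_add_of_le (by omega)
    obtain ⟨e', he'⟩ : ∃ e', e + w = v + e' := Nat.exists_eq_add_of_le (by omega)
    rw [ht', Nat.add_sub_cancel_left] at hk₂
    rw [ht'] at hk₁
    refine descend t' e' (k₁ + k₂) (by nlinarith) ?_
    linear_combination hk₁ + hk₂ + m (p + 1) * he'
  · exact ⟨t, e, 0, by omega, by omega, hcorner, by ring⟩

theorem normal_form_unique (hp : 0 < p) (harith : ∀ i ≤ p, m i = m 0 + i * c)
    (hm0 : 0 < m 0) {u v lam w mu z : ℕ}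
    (hu : ∀ t < u, ∀ δ ∈ gammaGen (p + 1) m, δ + m 0 ≠ gF p m t)
    (hv : ∀ e, 0 < e → e < v → e * m (p + 1) ∉ gammaGen p m) (hz : z < u)
    (hgu : gF p m u = lam * m 0 + w * m (p + 1))
    (hvmn : v * m (p + 1) = mu * m 0 + gF p m z)
    {a s b a' s' b' : ℕ} (hs : s < u) (hb : b < v) (hsb : ¬(u - z ≤ s ∧ v - w ≤ b))
    (hs' : s' < u) (hb' : b' < v) (hsb' : ¬(u - z ≤ s' ∧ v - w ≤ b'))
    (h : a * m 0 + gF p m s + b * m (p + 1) = a' * m 0 + gF p m s' + b' * m (p + 1)) :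
    a = a' ∧ s = s' ∧ b = b' := by
  have hcast : ∀ {x y : ℕ}, x = y → (x : ZMod (m 0)) = y := congrArg _
  have hux : u • (c : ZMod (m 0)) = w • (m (p + 1) : ZMod (m 0)) := by
    simpa [natCast_gF hp harith, nsmul_eq_mul] using hcast hgu
  have hvy : v • (m (p + 1) : ZMod (m 0)) = z • (c : ZMod (m 0)) := by
    simpa [natCast_gF hp harith, nsmul_eq_mul] using hcast hvmn
  obtain ⟨rfl, rfl⟩ := eq_of_nsmul_add_nsmul_eq
    (fun t ht e he => eq_zero_of_nsmul_eq_nsmul_of_apery hp harith hm0 hu hv ht he) hux hvy hz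
    hs hb hsb hs' hb' hsb' (by simpa [natCast_gF hp harith, nsmul_eq_mul] using hcast h)
  exact ⟨Nat.eq_of_mul_eq_mul_right hm0 (by omega), rfl, rfl⟩

end Apery

theorem stmt4_general
    (p n : ℕ) (hp : 1 ≤ p) (hn : n = p + 1)
    (m : ℕ → ℕ) (c : ℕ) (hm0 : 0 < m 0)
    (harith : ∀ i ≤ p, m i = m 0 + i * c)
    (S : Set ℕ)
    (hS : S = {γ | γ ∈ gammaGen n m ∧ ∀ δ ∈ gammaGen n m, δ + m 0 ≠ γ})
    (u : ℕ) (hu : IsLeast {t : ℕ | gF p m t ∉ S} u)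
    (v : ℕ) (hv : IsLeast {b : ℕ | 1 ≤ b ∧ b * m n ∈ gammaGen p m} v)
    (lam w mu z : ℕ) (hlam : 1 ≤ lam) (hw : w < v) (hz : z < u)
    (hgu : gF p m u = lam * m 0 + w * m n)
    (hvmn : v * m n = mu * m 0 + gF p m z)
    (V W : Set (ℕ × ℕ))
    (hV : V = {sb | sb.1 < u ∧ sb.2 < v})
    (hW : W = {sb | u - z ≤ sb.1 ∧ sb.1 < u ∧ v - w ≤ sb.2 ∧ sb.2 < v}) :
    ∀ γ ∈ gammaGen n m, ∃! x : ℕ × ℕ × ℕ,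
      (x.2.1, x.2.2) ∈ V \ W ∧ γ = x.1 * m 0 + gF p m x.2.1 + x.2.2 * m n := by
  subst hn hV hW
  have hApery : ∀ t < u, ∀ δ ∈ gammaGen (p + 1) m, δ + m 0 ≠ gF p m t := by
    intro t ht
    have hmem : gF p m t ∈ S := by_contra fun h => (hu.2 h).not_gt ht
    rw [hS] at hmem
    exact hmem.2
  have hmin : ∀ e, 0 < e → e < v → e * m (p + 1) ∉ gammaGen p m :=
    fun e he hev hmem => (hv.2 ⟨he, hmem⟩).not_gt hev
  intro γ hγ
  obtain ⟨a, t, e, rfl⟩ := exists_eq_mul_add_gF_add_mul hp harith hγ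
  obtain ⟨s, b, k, hs, hb, hsb, hk⟩ := exists_normal_form hp harith hlam hw hz hgu hvmn t e
  refine ⟨(a + k, s, b), ⟨⟨⟨hs, hb⟩, fun h => hsb ⟨h.1, h.2.2.1⟩⟩, by linear_combination hk⟩, ?_⟩
  rintro ⟨a', s', b'⟩ ⟨⟨⟨hs', hb'⟩, hsb'⟩, heq⟩
  obtain ⟨rfl, rfl, rfl⟩ := normal_form_unique hp harith hm0 hApery hmin hz hgu hvmn
    (a := a') (a' := a + k) hs' hb' (fun h => hsb' ⟨h.1, hs', h.2, hb'⟩) hs hb hsb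
    (by linear_combination -heq + hk)
  rfl

/-- Every element `γ` of `Γ` can be written uniquely as `a·m_0 + g_s + b·m_n`
with `a ∈ ℕ₀` and `(s,b) ∈ V∖W`. -/
theorem stmt4
    (p n : ℕ) (hp : 1 ≤ p) (hn : n = p + 1)
    (m : ℕ → ℕ) (c : ℕ) (hc : 1 ≤ c) (hm0 : 0 < m 0)
    (harith : ∀ i ≤ p, m i = m 0 + i * c) (hmn : 0 < m n)
    (hgcd : Finset.gcd (Finset.range (n + 1)) m = 1)
    (hminimal : ∀ j ≤ n, ¬ ∃ a : ℕ → ℕ, a j = 0 ∧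
        m j = ∑ i ∈ Finset.range (n + 1), a i * m i)
    (S : Set ℕ)
    (hS : S = {γ | γ ∈ gammaGen n m ∧ ∀ δ ∈ gammaGen n m, δ + m 0 ≠ γ})
    (u : ℕ) (hu : IsLeast {t : ℕ | gF p m t ∉ S} u)
    (v : ℕ) (hv : IsLeast {b : ℕ | 1 ≤ b ∧ b * m n ∈ gammaGen p m} v)
    (lam w mu z : ℕ) (hlam : 1 ≤ lam) (hw : w < v) (hz : z < u)
    (hgu : gF p m u = lam * m 0 + w * m n)
    (hvmn : v * m n = mu * m 0 + gF p m z)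
    (V W : Set (ℕ × ℕ))
    (hV : V = {sb | sb.1 < u ∧ sb.2 < v})
    (hW : W = {sb | u - z ≤ sb.1 ∧ sb.1 < u ∧ v - w ≤ sb.2 ∧ sb.2 < v}) :
    ∀ γ ∈ gammaGen n m, ∃! x : ℕ × ℕ × ℕ,
      (x.2.1, x.2.2) ∈ V \ W ∧ γ = x.1 * m 0 + gF p m x.2.1 + x.2.2 * m n :=
  stmt4_general p n hp hn m c hm0 harith S hS u hu v hv lam w mu z hlam hw hz hgu hvmn V W hV hW
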